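/- arXiv:0808.2200 — 2 statements merged into one kernel-verified Lean document; each statement's English description precedes it below -/
import Mathlib

section
/- Let p/q be a reduced fraction with q ≥ 1 and let x ∈ ℝ satisfy |x − p/q| < 1/(qn) for some n > q. Then every arc of the circle ℝ/ℤ of length at least 2/q contains a point of the set {kx mod 1 : 1 ≤ k ≤ q}; equivalently, the maximal gap of {kx : 1 ≤ k ≤ q} in ℝ/ℤ is at most 2/q. -/
/-- If `p/q` is a reduced fraction, `q ≥ 1`, and `|x - p/q| < 1/(qn)` with `n > q`,
then every arc of the circle `ℝ/ℤ` of length at least `2/q` contains a point of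
`{kx mod 1 : 1 ≤ k ≤ q}`. -/
theorem gap_of_multiples (p : ℤ) (q : ℕ) (hq : 1 ≤ q) (hcop : IsCoprime (p : ℤ) (q : ℤ))
    (x : ℝ) (n : ℕ) (hn : q < n)
    (happrox : |x - (p : ℝ) / q| < 1 / (q * n)) :
    ∀ a u : ℝ, 2 / q ≤ u →
      ∃ k : ℕ, 1 ≤ k ∧ k ≤ q ∧ ∃ j : ℤ,
        (k : ℝ) * x + (j : ℝ) ∈ Set.Icc a (a + u) := by
  classical
  intro a u hu
  obtain ⟨s, t, hst⟩ := hcop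
  obtain ⟨e, he⟩ : ∃ e : ℝ, e = x - (p : ℝ) / q := ⟨_, rfl⟩
  rw [← he] at happrox
  have hqz : (0:ℤ) < (q:ℤ) := by exact_mod_cast hq
  have hqr : (0:ℝ) < (q:ℝ) := by exact_mod_cast hq
  have hnr : (0:ℝ) < (n:ℝ) := by
    have : 0 < n := lt_of_le_of_lt (Nat.zero_le q) hn
    exact_mod_cast this
  -- key residue lemma
  have key : ∀ m : ℤ, ∃ K : ℤ, 1 ≤ K ∧ K ≤ (q:ℤ) ∧ (q:ℤ) ∣ K * p - m := by
    intro m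
    set r : ℤ := (m * s) % q with hr
    have hr0 : 0 ≤ r := Int.emod_nonneg _ (by omega)
    have hrq : r < q := Int.emod_lt_of_pos _ hqz
    have h1 : r = m * s - q * ((m*s)/q) := Int.emod_def (m*s) q
    have hd : (q:ℤ) ∣ r * p - m := by
      refine ⟨-((m*s)/q * p) - m*t, ?_⟩
      linear_combination p * h1 + m * hst
    by_cases h0 : r = 0
    · refine ⟨q, le_trans (by norm_num) hqz, le_refl _, ?_⟩
      obtain ⟨c, hc⟩ := hd
      exact ⟨c + p, by rw [h0] at hc; linear_combination hc⟩
    · exact ⟨r, by omega, le_of_lt hrq, hd⟩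
  choose K hK1 hK2 hKd using key
  obtain ⟨f, hf⟩ : ∃ f : ℤ → ℝ, ∀ m, f m = (m:ℝ)/q + (K m : ℝ) * e :=
    ⟨fun m => (m:ℝ)/q + (K m : ℝ) * e, fun _ => rfl⟩
  -- numeric facts
  have heb : |e| < 1/(q*n) := happrox
  have h1 : (q:ℝ) * |e| < 1/n := by
    have := mul_lt_mul_of_pos_left heb hqr
    calc (q:ℝ) * |e| < q * (1/(q*n)) := this
      _ = 1/n := by field_simp
  have h2 : (1:ℝ)/n < 1/q := by
    apply one_div_lt_one_div_of_lt hqr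
    exact_mod_cast hn
  have h3 : (q:ℝ) * |e| < 1/q := lt_trans h1 h2
  have h4 : (1:ℝ)/q ≤ 1 := by
    rw [div_le_one hqr]; exact_mod_cast hq
  have hKcast : ∀ m : ℤ, ((K m : ℝ)) ≤ q := by
    intro m; exact_mod_cast hK2 m
  have hKcast0 : ∀ m : ℤ, (0:ℝ) ≤ (K m : ℝ) := by
    intro m; have := hK1 m
    have : (1:ℝ) ≤ (K m : ℝ) := by exact_mod_cast this
    linarith
  have hfb : ∀ m : ℤ, |f m - (m:ℝ)/q| ≤ q * |e| := by
    intro m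
    rw [hf m, add_sub_cancel_left, abs_mul, abs_of_nonneg (hKcast0 m)]
    exact mul_le_mul_of_nonneg_right (hKcast m) (abs_nonneg e)
  -- least m with a ≤ f m
  have Hinh : ∃ z : ℤ, a ≤ f z := by
    refine ⟨⌈(a+1)*q⌉, ?_⟩
    have hc : (a+1)*q ≤ (⌈(a+1)*q⌉ : ℝ) := Int.le_ceil _
    have hdiv : a + 1 ≤ ((⌈(a+1)*q⌉:ℤ) : ℝ)/q := by
      rw [le_div_iff₀ hqr]; exact hc
    have := (abs_le.mp (hfb ⌈(a+1)*q⌉)).1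
    linarith
  have Hbdd : ∃ b : ℤ, ∀ z : ℤ, a ≤ f z → b ≤ z := by
    refine ⟨⌈(a-1)*q⌉, ?_⟩
    intro z hz
    have h5 := (abs_le.mp (hfb z)).2
    have hz1 : a - 1 ≤ (z:ℝ)/q := by linarith
    have hz2 : (a-1)*q ≤ (z:ℝ) := by
      calc (a-1)*q ≤ ((z:ℝ)/q)*q := by
            exact mul_le_mul_of_nonneg_right hz1 (le_of_lt hqr)
        _ = (z:ℝ) := by field_simp
    exact_mod_cast Int.ceil_le.mpr hz2
  obtain ⟨m, hm, hmin⟩ := Int.exists_least_of_bdd Hbdd Hinh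
  have hm1 : f (m-1) < a := by
    by_contra hcon
    push_neg at hcon
    have := hmin (m-1) hcon
    omega
  -- step bound
  have hstep : f m - f (m-1) ≤ 1/q + q * |e| := by
    have hcalc : f m - f (m-1) = 1/q + ((K m : ℝ) - (K (m-1) : ℝ)) * e := by
      rw [hf m, hf (m-1)]
      push_cast
      field_simp
      ring
    have habs : ((K m : ℝ) - (K (m-1) : ℝ)) * e ≤ q * |e| := by
      calc ((K m : ℝ) - (K (m-1) : ℝ)) * e ≤ |((K m : ℝ) - (K (m-1) : ℝ)) * e| := le_abs_self _
        _ = |(K m : ℝ) - (K (m-1) : ℝ)| * |e| := abs_mul _ _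
        _ ≤ q * |e| := by
            apply mul_le_mul_of_nonneg_right _ (abs_nonneg e)
            rw [abs_le]
            constructor
            · have h6 := hKcast (m-1); have h7 := hKcast0 m; linarith
            · have h6 := hKcast m; have h7 := hKcast0 (m-1); linarith
    linarith [hcalc, habs]
  have hfmu : f m ≤ a + u := by
    linarith [show (2:ℝ)/(q:ℝ) = 2*(1/(q:ℝ)) from by ring]
  -- produce witnesses
  refine ⟨(K m).toNat, ?_, ?_, ?_⟩
  · have := hK1 m; omega
  · have := hK2 m; omega
  · obtain ⟨c, hc⟩ := hKd m
    refine ⟨-c, ?_⟩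
    have hkr : (((K m).toNat : ℕ) : ℝ) = (K m : ℝ) := by
      have h := hK1 m
      have : ((K m).toNat : ℤ) = K m := Int.toNat_of_nonneg (by omega)
      exact_mod_cast this
    have hcR : (K m : ℝ) * p - m = q * c := by exact_mod_cast congrArg (Int.cast : ℤ → ℝ) hc
    have hx : x = (p:ℝ)/q + e := by rw [he]; ring
    have hpt : (((K m).toNat : ℕ) : ℝ) * x + ((-c : ℤ) : ℝ) = f m := by
      rw [hkr, hx, hf m]
      push_cast
      field_simp
      linarith [hcR]
    rw [hpt]
    exact ⟨hm, hfmu⟩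
end

section
/- Let r be a positive integer, ε > 0, and α ∈ ℝ/ℤ with ⟨qα⟩ < q^{−r−ε} for infinitely many odd positive integers q. Define the sequence s : ℤ → {0,1} by s_n = χ_{[0,1/2)}(αn^r + 1/4 mod 1). Then R(s) = T(s) = ∞: for every m there exist infinitely many n such that s_k = s_{k+n} and s_{n+1-k} = s_{1-k} for all 1 ≤ k ≤ mn. -/
open scoped ENNReal

noncomputable def Rn {A : Type*} (ω : ℤ → A) (n : ℕ) : ℝ≥0∞ :=
  1 + (n : ℝ≥0∞)⁻¹ *
    sSup ((fun m : ℕ => (m : ℝ≥0∞)) ''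
      {m : ℕ | ∀ k : ℕ, 1 ≤ k → k ≤ m → ω (k : ℤ) = ω ((k : ℤ) + n)})

noncomputable def Tn {A : Type*} (ω : ℤ → A) (n : ℕ) : ℝ≥0∞ :=
  1 + (n : ℝ≥0∞)⁻¹ *
    sSup ((fun m : ℕ => (m : ℝ≥0∞)) ''
      {m : ℕ | ∀ k : ℕ, 1 ≤ k → k ≤ m →
        ω (k : ℤ) = ω ((k : ℤ) + n) ∧ ω ((n : ℤ) + 1 - k) = ω (1 - (k : ℤ))})

noncomputable def RRep {A : Type*} (ω : ℤ → A) : ℝ≥0∞ := Filter.atTop.limsup (Rn ω)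

noncomputable def TRep {A : Type*} (ω : ℤ → A) : ℝ≥0∞ := Filter.atTop.limsup (Tn ω)

/-- `⟨t⟩`, the distance from `t` to the nearest integer. -/
noncomputable def distInt (t : ℝ) : ℝ := |t - round t|

/-!
Let `q` be odd with `|qα - p| q^r` small. For `|c| ≤ (m + 1) q` the number `α c^r + 1/4` is within
`1/(4q)` of `p c^r / q + 1/4 = (4 p c^r + q) / (4q)`, whose numerator is odd, so both lie in the
same half of `ℝ/ℤ`. Hence `s_c` agrees with the coding of `p c^r / q + 1/4`, which depends only on
`c mod q`: the sequence is `q`-periodic on `[-mq, mq]`, a pinned repetition of length `mq` at shift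
`q`, and such `q` exist for every `m` because `⟨qα⟩ q^r < q^{-ε} → 0` along the given odd `q`.
-/

open Filter

lemma Tn_le_Rn {A : Type*} (ω : ℤ → A) (n : ℕ) : Tn ω n ≤ Rn ω n := by
  unfold Tn Rn
  gcongr
  exact fun h => h.1

lemma TRep_le_RRep {A : Type*} (ω : ℤ → A) : TRep ω ≤ RRep ω :=
  limsup_le_limsup (.of_forall (Tn_le_Rn ω))

lemma inv_mul_le_Tn {A : Type*} {ω : ℤ → A} {n m : ℕ}
    (h : ∀ k : ℕ, 1 ≤ k → k ≤ m →
      ω (k : ℤ) = ω ((k : ℤ) + n) ∧ ω ((n : ℤ) + 1 - k) = ω (1 - (k : ℤ))) :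
    (n : ℝ≥0∞)⁻¹ * m ≤ Tn ω n := by
  unfold Tn
  refine le_add_left ?_
  gcongr
  exact le_sSup ⟨m, h, rfl⟩

lemma pinned_repetition_of_forall_abs_le {A : Type*} {ω : ℤ → A} {n L : ℕ}
    (h : ∀ a : ℤ, |a| ≤ L → ω a = ω (a + n)) (k : ℕ) (hk₁ : 1 ≤ k) (hk₂ : k ≤ L) :
    ω (k : ℤ) = ω ((k : ℤ) + n) ∧ ω ((n : ℤ) + 1 - k) = ω (1 - (k : ℤ)) :=
  ⟨h k (abs_le.2 ⟨by omega, by omega⟩),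
    ((h (1 - k) (abs_le.2 ⟨by omega, by omega⟩)).trans (congrArg ω (by ring))).symm⟩

lemma TRep_eq_top_of_frequently {A : Type*} {ω : ℤ → A}
    (h : ∀ m : ℕ, ∃ᶠ n : ℕ in atTop, ∀ a : ℤ, |a| ≤ m * n → ω a = ω (a + n)) :
    TRep ω = ⊤ := by
  refine eq_top_iff.2 (ENNReal.iSup_natCast ▸ iSup_le fun m => le_limsup_of_frequently_le' ?_)
  refine ((h m).and_eventually (eventually_gt_atTop 0)).mono fun n ⟨hper, hn⟩ => ?_
  calc (m : ℝ≥0∞) = (n : ℝ≥0∞)⁻¹ * (m * n : ℕ) := by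
        rw [Nat.cast_mul, mul_comm, mul_assoc, ENNReal.mul_inv_cancel (by positivity) (by simp),
          mul_one]
    _ ≤ Tn ω n := inv_mul_le_Tn (pinned_repetition_of_forall_abs_le (by exact_mod_cast hper))

lemma Int.fract_lt_half_iff_even_floor_two_mul (y : ℝ) :
    Int.fract y < 1 / 2 ↔ Even ⌊2 * y⌋ := by
  have h2y : 2 * y = ((2 * ⌊y⌋ : ℤ) : ℝ) + 2 * Int.fract y := by
    push_cast; linarith [Int.floor_add_fract y]
  rw [h2y, Int.floor_intCast_add, Int.even_add, iff_true_left (even_two_mul _)]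
  have hf₀ := Int.fract_nonneg y
  have hf₁ := Int.fract_lt_one y
  by_cases hy : Int.fract y < 1 / 2
  · rw [(Int.floor_eq_iff (z := 0)).2 ⟨by push_cast; linarith, by push_cast; linarith⟩]
    simpa using hy
  · rw [(Int.floor_eq_iff (z := 1)).2 ⟨by push_cast; linarith, by push_cast; linarith⟩]
    simpa using hy

lemma Int.floor_intCast_div_add_eq_ediv {M : ℤ} {n : ℕ} (hM : ¬ (n : ℤ) ∣ M) {t : ℝ}
    (ht : |t| < 1 / n) : ⌊(M : ℝ) / n + t⌋ = M / n := by
  have hn : (0 : ℝ) < n := by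
    rcases Nat.eq_zero_or_pos n with rfl | hn
    · simp at ht; linarith [abs_nonneg t]
    · exact_mod_cast hn
  have hnZ : (0 : ℤ) < n := by exact_mod_cast hn
  have hlo : 1 ≤ M % n := by
    have := Int.emod_nonneg M hnZ.ne'
    have : M % n ≠ 0 := fun h => hM (Int.dvd_of_emod_eq_zero h)
    omega
  have hhi : M % n + 1 ≤ n := Int.emod_lt_of_pos M hnZ
  have hsplit : (M : ℝ) / n = (M / n : ℤ) + ((M % n : ℤ) : ℝ) / n := by
    rw [add_div_eq_mul_add_div _ _ hn.ne']
    exact_mod_cast congrArg (fun z : ℤ => (z : ℝ) / n) (Int.ediv_mul_add_emod M n).symm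
  have he₁ : 1 / (n : ℝ) ≤ ((M % n : ℤ) : ℝ) / n := by gcongr; exact_mod_cast hlo
  have he₂ : ((M % n : ℤ) : ℝ) / n ≤ 1 - 1 / n := by
    rw [le_sub_iff_add_le, ← add_div, div_le_one hn]; exact_mod_cast hhi
  obtain ⟨ht₁, ht₂⟩ := abs_lt.1 ht
  rw [Int.floor_eq_iff, hsplit]
  constructor <;> linarith

lemma fract_add_quarter_lt_half_iff {q : ℕ} (hq : Odd q) (P : ℤ) {x : ℝ}
    (hx : |x - P / q| < 1 / (4 * q)) :
    Int.fract (x + 1 / 4) < 1 / 2 ↔ Int.fract ((P : ℝ) / q + 1 / 4) < 1 / 2 := by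
  have hq₀ : (0 : ℝ) < q := by exact_mod_cast hq.pos
  have hndvd : ¬ ((2 * q : ℕ) : ℤ) ∣ 4 * P + q := fun h => by
    have hodd : Odd (4 * P + q) := Even.add_odd ⟨2 * P, by ring⟩ (by exact_mod_cast hq)
    exact Int.not_even_iff_odd.2 hodd <| even_iff_two_dvd.2 <|
      (dvd_mul_right 2 (q : ℤ)).trans (by exact_mod_cast h)
  have hx' : |2 * (x - P / q)| < 1 / (2 * q : ℕ) := by
    rw [abs_mul, abs_two]; push_cast
    calc 2 * |x - P / q| < 2 * (1 / (4 * q)) := by gcongr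
      _ = 1 / (2 * q) := by field_simp; ring
  have hx_floor : ⌊2 * (x + 1 / 4)⌋ = (4 * P + q) / (2 * q : ℕ) := by
    rw [show 2 * (x + 1 / 4) = ((4 * P + q : ℤ) : ℝ) / (2 * q : ℕ) + 2 * (x - P / q) by
      push_cast; field_simp; ring]
    exact Int.floor_intCast_div_add_eq_ediv hndvd hx'
  have hP_floor : ⌊2 * ((P : ℝ) / q + 1 / 4)⌋ = (4 * P + q) / (2 * q : ℕ) := by
    rw [show 2 * ((P : ℝ) / q + 1 / 4) = ((4 * P + q : ℤ) : ℝ) / (2 * q : ℕ) + 0 by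
      push_cast; field_simp; ring]
    exact Int.floor_intCast_div_add_eq_ediv hndvd (by simpa using hq₀)
  rw [Int.fract_lt_half_iff_even_floor_two_mul, Int.fract_lt_half_iff_even_floor_two_mul,
    hx_floor, hP_floor]

lemma fract_lt_half_iff_of_dvd_sub {r q : ℕ} (hq : Odd q) {α N : ℝ} {p : ℤ}
    (hN : |q * α - p| * N ^ r < 1 / 4) {a b : ℤ} (ha : |(a : ℝ)| ≤ N) (hb : |(b : ℝ)| ≤ N)
    (hab : (q : ℤ) ∣ b - a) :
    Int.fract (α * a ^ r + 1 / 4) < 1 / 2 ↔ Int.fract (α * b ^ r + 1 / 4) < 1 / 2 := by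
  have hq₀ : (0 : ℝ) < q := by exact_mod_cast hq.pos
  have hnear (c : ℤ) (hc : |(c : ℝ)| ≤ N) :
      |α * c ^ r - ((p * c ^ r : ℤ) : ℝ) / q| < 1 / (4 * q) := by
    have hc' : α * c ^ r - ((p * c ^ r : ℤ) : ℝ) / q = (q * α - p) * c ^ r / q := by
      push_cast; field_simp
    have hsmall : |q * α - p| * |(c : ℝ)| ^ r < 1 / 4 := lt_of_le_of_lt (by gcongr) hN
    rw [hc', abs_div, abs_of_pos hq₀, div_lt_div_iff₀ hq₀ (by positivity), abs_mul, abs_pow]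
    nlinarith
  obtain ⟨t, ht⟩ : (q : ℤ) ∣ p * b ^ r - p * a ^ r := by
    rw [← mul_sub]; exact (hab.trans (sub_dvd_pow_sub_pow b a r)).mul_left p
  have htR : (p : ℝ) * b ^ r - p * a ^ r = q * t := by exact_mod_cast ht
  have hfract : Int.fract (((p * a ^ r : ℤ) : ℝ) / q + 1 / 4)
      = Int.fract (((p * b ^ r : ℤ) : ℝ) / q + 1 / 4) :=
    Int.fract_eq_fract.2 ⟨-t, by push_cast; field_simp; linarith⟩
  rw [fract_add_quarter_lt_half_iff hq _ (hnear a ha),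
    fract_add_quarter_lt_half_iff hq _ (hnear b hb), hfract]

lemma frequently_odd_distInt_mul_pow_lt {r : ℕ} {ε : ℝ} (hε : 0 < ε) {α : ℝ}
    (hα : {q : ℕ | Odd q ∧ 0 < q ∧ distInt ((q : ℝ) * α) < (q : ℝ) ^ (-(r : ℝ) - ε)}.Infinite)
    {η : ℝ} (hη : 0 < η) :
    ∃ᶠ q : ℕ in atTop, Odd q ∧ distInt ((q : ℝ) * α) * (q : ℝ) ^ r < η := by
  have hsmall : ∀ᶠ q : ℕ in atTop, (q : ℝ) ^ (-ε) < η :=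
    ((tendsto_rpow_neg_atTop hε).comp tendsto_natCast_atTop_atTop).eventually (gt_mem_nhds hη)
  refine ((Nat.frequently_atTop_iff_infinite.2 hα).and_eventually hsmall).mono ?_
  rintro q ⟨⟨hq, hq₀, hdist⟩, hqε⟩
  have hq₀' : (0 : ℝ) < q := by exact_mod_cast hq₀
  refine ⟨hq, ?_⟩
  calc distInt (q * α) * q ^ r < q ^ (-(r : ℝ) - ε) * q ^ r := by gcongr
    _ = q ^ (-ε) := by rw [← Real.rpow_natCast, ← Real.rpow_add hq₀']; ring_nf
    _ < η := hqε

theorem infinite_repetitions_polynomial_general (r : ℕ) (ε : ℝ) (hε : 0 < ε)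
    (α : ℝ)
    (hα : {q : ℕ | Odd q ∧ 0 < q ∧
      distInt ((q : ℝ) * α) < (q : ℝ) ^ (-(r : ℝ) - ε)}.Infinite) :
    RRep (fun n : ℤ => if Int.fract (α * (n : ℝ) ^ r + 1 / 4) < 1 / 2 then (1 : ℕ) else 0) = ⊤ ∧
    TRep (fun n : ℤ => if Int.fract (α * (n : ℝ) ^ r + 1 / 4) < 1 / 2 then (1 : ℕ) else 0) = ⊤ := by
  set s : ℤ → ℕ := fun n => if Int.fract (α * (n : ℝ) ^ r + 1 / 4) < 1 / 2 then 1 else 0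
  suffices hT : TRep s = ⊤ from ⟨top_le_iff.1 (hT ▸ TRep_le_RRep s), hT⟩
  refine TRep_eq_top_of_frequently fun m => ?_
  have hη : (0 : ℝ) < 1 / (4 * (m + 1) ^ r) := by positivity
  refine (frequently_odd_distInt_mul_pow_lt hε hα hη).mono fun q ⟨hq, hqα⟩ a ha => ?_
  have hN : |q * α - round (q * α)| * ((m + 1) * q) ^ r < 1 / 4 :=
    calc distInt (q * α) * ((m + 1) * q) ^ r = (m + 1) ^ r * (distInt (q * α) * q ^ r) := by
          rw [mul_pow]; ring
      _ < (m + 1) ^ r * (1 / (4 * (m + 1) ^ r)) := by gcongr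
      _ = 1 / 4 := by field_simp
  have ha' : |(a : ℝ)| ≤ m * q := by exact_mod_cast ha
  have haq : |((a + q : ℤ) : ℝ)| ≤ (m + 1) * q := by
    push_cast
    linarith [abs_add_le (a : ℝ) q, abs_of_nonneg (Nat.cast_nonneg q : (0 : ℝ) ≤ q)]
  exact if_congr (fract_lt_half_iff_of_dvd_sub hq hN (by linarith) haq ⟨1, by ring⟩) rfl rfl

/-- If `⟨qα⟩ < q^{-r-ε}` for infinitely many odd positive integers `q`, then the
coding `s_n = χ_{[0,1/2)}(αn^r + 1/4)` has infinite pinned repetitions: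
`R(s) = T(s) = ∞`. -/
theorem infinite_repetitions_polynomial (r : ℕ) (hr : 0 < r) (ε : ℝ) (hε : 0 < ε)
    (α : ℝ)
    (hα : {q : ℕ | Odd q ∧ 0 < q ∧
      distInt ((q : ℝ) * α) < (q : ℝ) ^ (-(r : ℝ) - ε)}.Infinite) :
    RRep (fun n : ℤ => if Int.fract (α * (n : ℝ) ^ r + 1 / 4) < 1 / 2 then (1 : ℕ) else 0) = ⊤ ∧
    TRep (fun n : ℤ => if Int.fract (α * (n : ℝ) ^ r + 1 / 4) < 1 / 2 then (1 : ℕ) else 0) = ⊤ :=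
  infinite_repetitions_polynomial_general r ε hε α hα
end
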